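/- arXiv:2210.15171 — 2 statements merged into one kernel-verified Lean document; each statement's English description precedes it below -/
import Mathlib

section
/- Under the setup of the minimal-solution splitting iteration (Z-tensor A, b ≥ 0, S_g nonempty, A's majorization matrix M, tensor splitting A = M_tensor − N with N ≥ 0): let (x_k) and (x̂_k) be generated by P x_{k+1}^{[m-1]} = Q x_k^{[m-1]} + N x_k^{m-1} + b and P̂ x̂_{k+1}^{[m-1]} = Q̂ x̂_k^{[m-1]} + N x̂_k^{m-1} + b respectively, where M = P − Q = P̂ − Q̂ with P, P̂ nonsingular M-matrices and Q, Q̂ ≥ 0, starting from x_0 = x̂_0 = 0. If Q̂ ≤ Q entrywise, then x_k ≤ x̂_k for all k ≥ 0. -/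
open Finset Filter

noncomputable section

/-- Action of an order-(p+1) tensor (p trailing indices):
`(A x^{p})_i = ∑ a_{i i₂ … i_{p+1}} x_{i₂} ⋯ x_{i_{p+1}}`. -/
def tapp (p n : ℕ) (A : Fin n → (Fin p → Fin n) → ℝ) (x : Fin n → ℝ) : Fin n → ℝ :=
  fun i => ∑ js : Fin p → Fin n, A i js * ∏ j, x (js j)

/-- A `Z`-tensor: all off-diagonal entries are nonpositive. -/
def IsZTensor (p n : ℕ) (A : Fin n → (Fin p → Fin n) → ℝ) : Prop :=
  ∀ i js, (∃ j, js j ≠ i) → A i js ≤ 0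

/-- The identity tensor. -/
def identT (p n : ℕ) : Fin n → (Fin p → Fin n) → ℝ :=
  fun i js => if ∀ j, js j = i then 1 else 0

/-- Spectral radius of a tensor: sup of moduli of (real) eigenvalues. -/
def tensorSpecRad (p n : ℕ) (B : Fin n → (Fin p → Fin n) → ℝ) : ℝ :=
  sSup {r : ℝ | ∃ lam : ℝ, ∃ x : Fin n → ℝ, x ≠ 0 ∧
    (∀ i, tapp p n B x i = lam * x i ^ p) ∧ r = |lam|}

/-- A nonsingular M-tensor: `A = s I − B` with `B ≥ 0` and `s > ρ(B)`. -/
def IsMTensor (p n : ℕ) (A : Fin n → (Fin p → Fin n) → ℝ) : Prop :=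
  ∃ s : ℝ, ∃ B : Fin n → (Fin p → Fin n) → ℝ,
    (∀ i js, 0 ≤ B i js) ∧ tensorSpecRad p n B < s ∧
    ∀ i js, A i js = s * identT p n i js - B i js

/-- The diagonal-part tensor of `A`. -/
def diagT (p n : ℕ) (A : Fin n → (Fin p → Fin n) → ℝ) : Fin n → (Fin p → Fin n) → ℝ :=
  fun i js => if ∀ j, js j = i then A i (fun _ => i) else 0

/-- The majorization matrix of `A`: `M_{ij} = a_{i j … j}`. -/
def majMatrix (p n : ℕ) (A : Fin n → (Fin p → Fin n) → ℝ) : Matrix (Fin n) (Fin n) ℝ :=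
  fun i j => A i (fun _ => j)

/-- The "mixed index" part `N = M_tensor − A`: zero on constant trailing tuples,
`−A` elsewhere. -/
def NPart (p n : ℕ) (A : Fin n → (Fin p → Fin n) → ℝ) : Fin n → (Fin p → Fin n) → ℝ :=
  fun i js => if ∀ j' j'', js j' = js j'' then 0 else -A i js

/-- A nonsingular M-matrix: a Z-matrix with `M y > 0` for some `y > 0`. -/
def IsMMatrix (n : ℕ) (P : Matrix (Fin n) (Fin n) ℝ) : Prop :=
  (∀ i j, i ≠ j → P i j ≤ 0) ∧ ∃ y : Fin n → ℝ, (∀ i, 0 < y i) ∧ ∀ i, 0 < P.mulVec y i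

/-- Spectral radius of a real matrix (via its complex spectrum). -/
def matSpecRad (n : ℕ) (J : Matrix (Fin n) (Fin n) ℝ) : ℝ :=
  sSup {r : ℝ | ∃ μ ∈ spectrum ℂ (J.map (Complex.ofReal ·)), r = ‖μ‖}

/-- Irreducibility of a matrix. -/
def MatIrreducible (n : ℕ) (J : Matrix (Fin n) (Fin n) ℝ) : Prop :=
  ∀ S : Finset (Fin n), S.Nonempty → S ≠ Finset.univ → ∃ i ∈ S, ∃ j, j ∉ S ∧ J i j ≠ 0

open Matrix

section

variable {n p : ℕ}

lemma Matrix.mulVec_le_mulVec_of_nonneg {M : Matrix (Fin n) (Fin n) ℝ} (hM : ∀ i j, 0 ≤ M i j)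
    {u v : Fin n → ℝ} (h : u ≤ v) : M *ᵥ u ≤ M *ᵥ v :=
  fun i => dotProduct_le_dotProduct_of_nonneg_left h (hM i)

lemma tapp_le_tapp {B : Fin n → (Fin p → Fin n) → ℝ} (hB : ∀ i js, 0 ≤ B i js)
    {u v : Fin n → ℝ} (hu : 0 ≤ u) (h : u ≤ v) : tapp p n B u ≤ tapp p n B v := fun i =>
  Finset.sum_le_sum fun js _ => mul_le_mul_of_nonneg_left
    (Finset.prod_le_prod (fun j _ => hu (js j)) (fun j _ => h (js j))) (hB i js)

lemma IsZTensor.NPart_nonneg {A : Fin n → (Fin p → Fin n) → ℝ} (hA : IsZTensor p n A) :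
    ∀ i js, 0 ≤ NPart p n A i js := by
  intro i js
  unfold NPart
  split_ifs with hconst
  · exact le_rfl
  · obtain ⟨j', j'', hne⟩ : ∃ j' j'', js j' ≠ js j'' := by simpa using hconst
    have hoff : ∃ j, js j ≠ i := by
      by_contra! hall
      exact hne ((hall j').trans (hall j'').symm)
    linarith [hA i js hoff]

lemma mulVec_apply_nonpos_of_offDiag_nonpos {P : Matrix (Fin n) (Fin n) ℝ}
    (hZ : ∀ i j, i ≠ j → P i j ≤ 0) {z : Fin n → ℝ} (hz : 0 ≤ z) {i : Fin n} (hzi : z i = 0) :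
    (P *ᵥ z) i ≤ 0 := by
  change ∑ j, P i j * z j ≤ 0
  refine Finset.sum_nonpos fun j _ => ?_
  rcases eq_or_ne i j with rfl | hij
  · simp [hzi]
  · exact mul_nonpos_of_nonpos_of_nonneg (hZ i j hij) (hz j)

/-- Shift `w` by the multiple of the positive vector `y` that makes it nonnegative with a zero
entry at `i₀`; the Z-pattern forces `(P w)ᵢ₀ < 0` unless `w ≥ 0`. -/
lemma IsMMatrix.nonneg_of_mulVec_nonneg {P : Matrix (Fin n) (Fin n) ℝ} (hP : IsMMatrix n P)
    {w : Fin n → ℝ} (h : 0 ≤ P *ᵥ w) : 0 ≤ w := by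
  obtain ⟨hZ, y, hy, hPy⟩ := hP
  by_contra hneg
  obtain ⟨i, hi⟩ : ∃ i, w i < 0 := by simpa [Pi.le_def] using hneg
  obtain ⟨i₀, -, hmin⟩ := Finset.exists_min_image Finset.univ (fun j => w j / y j) ⟨i, mem_univ i⟩
  set c := w i₀ / y i₀
  have hc : c < 0 := (hmin i (mem_univ i)).trans_lt (div_neg_of_neg_of_pos hi (hy i))
  have hz : 0 ≤ w - c • y := fun j => by
    have := hmin j (mem_univ j)
    rw [le_div_iff₀ (hy j)] at this
    simp only [Pi.zero_apply, Pi.sub_apply, Pi.smul_apply, smul_eq_mul]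
    linarith
  have hzi₀ : (w - c • y) i₀ = 0 := by
    simp [c, div_mul_cancel₀ _ (hy i₀).ne']
  have hnonpos := mulVec_apply_nonpos_of_offDiag_nonpos hZ hz hzi₀
  rw [mulVec_sub, mulVec_smul] at hnonpos
  simp only [Pi.sub_apply, Pi.smul_apply, smul_eq_mul] at hnonpos
  linarith [show 0 ≤ (P *ᵥ w) i₀ from h i₀, mul_neg_of_neg_of_pos hc (hPy i₀)]

lemma IsMMatrix.le_of_mulVec_pow_le {P : Matrix (Fin n) (Fin n) ℝ} (hP : IsMMatrix n P)
    (hp : p ≠ 0) {u v : Fin n → ℝ} (hu : 0 ≤ u) (hv : 0 ≤ v) (h : P *ᵥ u ^ p ≤ P *ᵥ v ^ p) :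
    u ≤ v := by
  have hpow : u ^ p ≤ v ^ p :=
    sub_nonneg.mp (hP.nonneg_of_mulVec_nonneg (by rwa [mulVec_sub, sub_nonneg]))
  exact fun j => (pow_le_pow_iff_left₀ (hu j) (hv j) hp).mp (hpow j)

/-- The right-hand side `Q x^[p] + N x^p + b` of the splitting iteration `P x_{k+1}^[p] = …`. -/
def splitStep (Q : Matrix (Fin n) (Fin n) ℝ) (N : Fin n → (Fin p → Fin n) → ℝ) (b x : Fin n → ℝ) :
    Fin n → ℝ :=
  Q *ᵥ x ^ p + tapp p n N x + b

lemma splitStep_mono {Q : Matrix (Fin n) (Fin n) ℝ} (hQ : ∀ i j, 0 ≤ Q i j)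
    {N : Fin n → (Fin p → Fin n) → ℝ} (hN : ∀ i js, 0 ≤ N i js) (b : Fin n → ℝ)
    {u v : Fin n → ℝ} (hu : 0 ≤ u) (h : u ≤ v) : splitStep Q N b u ≤ splitStep Q N b v := by
  have hpow : u ^ p ≤ v ^ p := fun j => pow_le_pow_left₀ (hu j) (h j) p
  unfold splitStep
  gcongr
  · exact mulVec_le_mulVec_of_nonneg hQ hpow
  · exact tapp_le_tapp hN hu h

variable {P Q : Matrix (Fin n) (Fin n) ℝ} {N : Fin n → (Fin p → Fin n) → ℝ} {b : Fin n → ℝ}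

lemma splitIteration_monotone (hp : p ≠ 0) (hP : IsMMatrix n P) (hQ : ∀ i j, 0 ≤ Q i j)
    (hN : ∀ i js, 0 ≤ N i js) {x : ℕ → Fin n → ℝ} (hx0 : x 0 = 0) (hxpos : ∀ k, 0 ≤ x k)
    (hiter : ∀ k, P *ᵥ x (k + 1) ^ p = splitStep Q N b (x k)) : Monotone x := by
  refine monotone_nat_of_le_succ fun k => ?_
  induction k with
  | zero => exact hx0 ▸ hxpos 1
  | succ k ih =>
    refine hP.le_of_mulVec_pow_le hp (hxpos _) (hxpos _) ?_
    rw [hiter, hiter]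
    exact splitStep_mono hQ hN b (hxpos k) ih

/-- With `P̂ = P - (Q - Q̂)`, the step `x_k ≤ x̂_k` becomes `P̂ x_{k+1}^[p] ≤ P̂ x̂_{k+1}^[p]`
once `(Q - Q̂) x_k^[p] ≤ (Q - Q̂) x_{k+1}^[p]`, i.e. by monotonicity of `(x_k)`. -/
lemma splitIteration_le_of_le {Ph Qh : Matrix (Fin n) (Fin n) ℝ} (hp : p ≠ 0)
    (hP : IsMMatrix n P) (hPh : IsMMatrix n Ph) (hQ : ∀ i j, 0 ≤ Q i j) (hQh : ∀ i j, 0 ≤ Qh i j)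
    (hQle : ∀ i j, Qh i j ≤ Q i j) (hsplit : P - Q = Ph - Qh) (hN : ∀ i js, 0 ≤ N i js)
    {x xh : ℕ → Fin n → ℝ} (hx0 : x 0 = 0) (hxh0 : xh 0 = 0)
    (hxpos : ∀ k, 0 ≤ x k) (hxhpos : ∀ k, 0 ≤ xh k)
    (hiter : ∀ k, P *ᵥ x (k + 1) ^ p = splitStep Q N b (x k))
    (hiterh : ∀ k, Ph *ᵥ xh (k + 1) ^ p = splitStep Qh N b (xh k)) :
    ∀ k, x k ≤ xh k := by
  have hxmono := splitIteration_monotone hp hP hQ hN hx0 hxpos hiter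
  have hPh_eq : Ph = P - (Q - Qh) := by rw [← sub_add, hsplit, sub_add_cancel]
  have hQQh : ∀ i j, 0 ≤ (Q - Qh) i j := fun i j => sub_nonneg.mpr (hQle i j)
  have hsplitStep_eq : ∀ u, splitStep Q N b u = splitStep Qh N b u + (Q - Qh) *ᵥ u ^ p := by
    intro u
    simp only [splitStep, sub_mulVec]
    abel
  intro k
  induction k with
  | zero => rw [hx0, hxh0]
  | succ k ih =>
    refine hPh.le_of_mulVec_pow_le hp (hxpos _) (hxhpos _) ?_
    have hlag : (Q - Qh) *ᵥ x k ^ p ≤ (Q - Qh) *ᵥ x (k + 1) ^ p :=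
      mulVec_le_mulVec_of_nonneg hQQh fun j =>
        pow_le_pow_left₀ (hxpos k j) (hxmono k.le_succ j) p
    calc Ph *ᵥ x (k + 1) ^ p = splitStep Q N b (x k) - (Q - Qh) *ᵥ x (k + 1) ^ p := by
          rw [hPh_eq, sub_mulVec, hiter]
      _ ≤ splitStep Qh N b (x k) := by
          rw [hsplitStep_eq, sub_le_iff_le_add]
          exact add_le_add le_rfl hlag
      _ ≤ splitStep Qh N b (xh k) := splitStep_mono hQh hN b (hxpos k) ih
      _ = Ph *ᵥ xh (k + 1) ^ p := (hiterh k).symm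

end

theorem stmt12_general (m n : ℕ) (hm : 2 ≤ m) (A : Fin n → (Fin (m-1) → Fin n) → ℝ)
    (hA : IsZTensor (m-1) n A) (b : Fin n → ℝ)
    (P Q Ph Qh : Matrix (Fin n) (Fin n) ℝ)
    (hP : IsMMatrix n P) (hPh : IsMMatrix n Ph)
    (hQ : ∀ i j, 0 ≤ Q i j) (hQh : ∀ i j, 0 ≤ Qh i j)
    (hsplit : majMatrix (m-1) n A = P - Q)
    (hsplith : majMatrix (m-1) n A = Ph - Qh)
    (x xh : ℕ → Fin n → ℝ) (hx0 : x 0 = 0) (hxh0 : xh 0 = 0)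
    (hxpos : ∀ k, 0 ≤ x k) (hxhpos : ∀ k, 0 ≤ xh k)
    (hiter : ∀ k i, P.mulVec (fun j => x (k+1) j ^ (m-1)) i =
      Q.mulVec (fun j => x k j ^ (m-1)) i +
        tapp (m-1) n (NPart (m-1) n A) (x k) i + b i)
    (hiterh : ∀ k i, Ph.mulVec (fun j => xh (k+1) j ^ (m-1)) i =
      Qh.mulVec (fun j => xh k j ^ (m-1)) i +
        tapp (m-1) n (NPart (m-1) n A) (xh k) i + b i)
    (hQle : ∀ i j, Qh i j ≤ Q i j) :
    ∀ k, x k ≤ xh k :=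
  splitIteration_le_of_le (by omega : m - 1 ≠ 0) hP hPh hQ hQh hQle (hsplit.symm.trans hsplith)
    hA.NPart_nonneg hx0 hxh0 hxpos hxhpos (fun k => funext (hiter k)) (fun k => funext (hiterh k))

/-- comparison of two splittings `M = P − Q = P̂ − Q̂` for the increasing
iteration from `x₀ = x̂₀ = 0`: if `Q̂ ≤ Q` entrywise then `x_k ≤ x̂_k` for all `k`. -/
theorem stmt12 (m n : ℕ) (hm : 2 ≤ m) (A : Fin n → (Fin (m-1) → Fin n) → ℝ)
    (hA : IsZTensor (m-1) n A) (b : Fin n → ℝ) (hb : 0 ≤ b)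
    (hne : ∃ x : Fin n → ℝ, 0 ≤ x ∧ b ≤ tapp (m-1) n A x)
    (P Q Ph Qh : Matrix (Fin n) (Fin n) ℝ)
    (hP : IsMMatrix n P) (hPh : IsMMatrix n Ph)
    (hQ : ∀ i j, 0 ≤ Q i j) (hQh : ∀ i j, 0 ≤ Qh i j)
    (hsplit : majMatrix (m-1) n A = P - Q)
    (hsplith : majMatrix (m-1) n A = Ph - Qh)
    (x xh : ℕ → Fin n → ℝ) (hx0 : x 0 = 0) (hxh0 : xh 0 = 0)
    (hxpos : ∀ k, 0 ≤ x k) (hxhpos : ∀ k, 0 ≤ xh k)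
    (hiter : ∀ k i, P.mulVec (fun j => x (k+1) j ^ (m-1)) i =
      Q.mulVec (fun j => x k j ^ (m-1)) i +
        tapp (m-1) n (NPart (m-1) n A) (x k) i + b i)
    (hiterh : ∀ k i, Ph.mulVec (fun j => xh (k+1) j ^ (m-1)) i =
      Qh.mulVec (fun j => xh k j ^ (m-1)) i +
        tapp (m-1) n (NPart (m-1) n A) (xh k) i + b i)
    (hQle : ∀ i j, Qh i j ≤ Q i j) :
    ∀ k, x k ≤ xh k :=
  stmt12_general m n hm A hA b P Q Ph Qh hP hPh hQ hQh hsplit hsplith x xh hx0 hxh0 hxpos hxhpos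
    hiter hiterh hQle

end
end

section
/- Let A be a nonsingular M-tensor and b a positive vector. Then the unique positive solution of A x^{m-1} = b is the only nonnegative solution; equivalently, the minimal nonnegative solution is positive and equal to the maximal nonnegative solution. -/
open Finset Filter

noncomputable section

/-!
Write `A = s I - B` with `B ≥ 0` and `ρ(B) < s`, so that `A x^{m-1} = b` reads
`s xᵢ^{m-1} = bᵢ + (B x^{m-1})ᵢ`. Perron–Frobenius for the positive tensors `B + ε` (an eigenpair
maximises the Collatz–Wielandt value over the simplex), together with a compactness argument as
`ε → 0`, turns `ρ(B) < s` into a vector `w > 0` with `B w^{m-1} < s w^{[m-1]}`; a large multiple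
`u` of `w` is then a supersolution. The Jacobi map `x ↦ ((b + B x^{m-1}) / s)^{1/(m-1)}` is
monotone and maps the order interval `[0, u]` into itself, so by Knaster–Tarski it has a fixed
point there, positive because `b > 0`. Every nonnegative solution is positive for the same reason,
and looking at the largest ratio `yᵢ / xᵢ` shows that a subsolution lies below a supersolution, so
two positive solutions coincide.
-/

open Topology

section TensorEquation

variable {p n : ℕ}

section Action

variable (A : Fin n → (Fin p → Fin n) → ℝ)

lemma tapp_nonneg (hA : ∀ i js, 0 ≤ A i js) {x : Fin n → ℝ} (hx : 0 ≤ x) (i : Fin n) :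
    0 ≤ tapp p n A x i :=
  sum_nonneg fun js _ => mul_nonneg (hA i js) (prod_nonneg fun _ _ => hx _)

lemma tapp_le_tapp_s17 (hA : ∀ i js, 0 ≤ A i js) {x y : Fin n → ℝ} (hx : 0 ≤ x) (hxy : x ≤ y)
    (i : Fin n) : tapp p n A x i ≤ tapp p n A y i :=
  sum_le_sum fun js _ => mul_le_mul_of_nonneg_left
    (prod_le_prod (fun _ _ => hx _) fun _ _ => hxy _) (hA i js)

lemma tapp_lt_tapp (hp : p ≠ 0) (hA : ∀ i js, 0 < A i js) {x y : Fin n → ℝ} (hx : 0 ≤ x)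
    (hxy : x ≤ y) {j : Fin n} (hj : x j < y j) (i : Fin n) :
    tapp p n A x i < tapp p n A y i := by
  refine sum_lt_sum (fun js _ => mul_le_mul_of_nonneg_left
    (prod_le_prod (fun _ _ => hx _) fun _ _ => hxy _) (hA i js).le) ⟨fun _ => j, mem_univ _, ?_⟩
  simp only [prod_const, card_univ, Fintype.card_fin]
  exact mul_lt_mul_of_pos_left (pow_lt_pow_left₀ hj (hx j) hp) (hA i _)

lemma tapp_zero (hp : p ≠ 0) : tapp p n A 0 = 0 := by
  ext i
  simp [tapp, zero_pow hp]

lemma tapp_pos (hp : p ≠ 0) (hA : ∀ i js, 0 < A i js) {x : Fin n → ℝ} (hx : 0 ≤ x)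
    (hx0 : x ≠ 0) (i : Fin n) : 0 < tapp p n A x i := by
  obtain ⟨j, hj⟩ := Function.ne_iff.mp hx0
  simpa [tapp_zero A hp] using tapp_lt_tapp A hp hA le_rfl hx (lt_of_le_of_ne (hx j) hj.symm) i

lemma tapp_lt_tapp_left [Nonempty (Fin n)] {A' : Fin n → (Fin p → Fin n) → ℝ} {i : Fin n}
    (hAA' : ∀ js, A i js < A' i js) {x : Fin n → ℝ} (hx : ∀ j, 0 < x j) :
    tapp p n A x i < tapp p n A' x i :=
  sum_lt_sum_of_nonempty univ_nonempty fun js _ =>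
    mul_lt_mul_of_pos_right (hAA' js) (prod_pos fun _ _ => hx _)

lemma tapp_const_mul (t : ℝ) (x : Fin n → ℝ) (i : Fin n) :
    tapp p n A (fun j => t * x j) i = t ^ p * tapp p n A x i := by
  simp only [tapp, mul_sum, prod_mul_distrib, prod_const, card_univ, Fintype.card_fin]
  exact sum_congr rfl fun js _ => by ring

lemma tapp_identT (x : Fin n → ℝ) (i : Fin n) : tapp p n (identT p n) x i = x i ^ p := by
  have hconst : ∀ js : Fin p → Fin n, (∀ j, js j = i) ↔ js = fun _ => i := fun js => funext_iff.symm
  simp [tapp, identT, hconst]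

lemma tapp_eq_mul_pow_sub {B : Fin n → (Fin p → Fin n) → ℝ} {s : ℝ}
    (hA : ∀ i js, A i js = s * identT p n i js - B i js) (x : Fin n → ℝ) (i : Fin n) :
    tapp p n A x i = s * x i ^ p - tapp p n B x i := by
  simp only [← tapp_identT x i, tapp, hA, sub_mul, sum_sub_distrib, mul_sum, mul_assoc]

end Action

lemma continuous_tapp (i : Fin n) :
    Continuous fun z : (Fin n → (Fin p → Fin n) → ℝ) × (Fin n → ℝ) => tapp p n z.1 z.2 i := by
  unfold tapp
  fun_prop

lemma ne_zero_of_mem_stdSimplex {ι : Type*} [Fintype ι] {x : ι → ℝ} (hx : x ∈ stdSimplex ℝ ι) :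
    x ≠ 0 := by
  rintro rfl
  simpa using hx.2

section Spectrum

lemma le_sum_abs_of_mul_pow_le (D : Fin n → (Fin p → Fin n) → ℝ) {t : ℝ} {x : Fin n → ℝ}
    (hx : x ≠ 0) (h : ∀ i, t * |x i| ^ p ≤ |tapp p n D x i|) :
    t ≤ ∑ i, ∑ js : Fin p → Fin n, |D i js| := by
  obtain ⟨k, hk⟩ := Function.ne_iff.mp hx
  obtain ⟨i, -, hmax⟩ := exists_max_image univ (fun i => |x i|) ⟨k, mem_univ k⟩
  have hxi : 0 < |x i| ^ p := pow_pos ((abs_pos.mpr hk).trans_le (hmax k (mem_univ k))) p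
  have hrow : |tapp p n D x i| ≤ (∑ js : Fin p → Fin n, |D i js|) * |x i| ^ p := by
    calc |tapp p n D x i| ≤ ∑ js : Fin p → Fin n, |D i js| * ∏ j, |x (js j)| := by
          simpa only [tapp, abs_mul, abs_prod] using
            abs_sum_le_sum_abs (fun js => D i js * ∏ j, x (js j)) univ
      _ ≤ ∑ js : Fin p → Fin n, |D i js| * |x i| ^ p := by
          refine sum_le_sum fun js _ => mul_le_mul_of_nonneg_left ?_ (abs_nonneg _)
          simpa using prod_le_prod (s := univ) (fun _ _ => abs_nonneg _)
            fun j _ => hmax (js j) (mem_univ _)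
      _ = (∑ js : Fin p → Fin n, |D i js|) * |x i| ^ p := sum_mul .. |>.symm
  calc t ≤ ∑ js : Fin p → Fin n, |D i js| := le_of_mul_le_mul_right ((h i).trans hrow) hxi
    _ ≤ ∑ i, ∑ js : Fin p → Fin n, |D i js| :=
      single_le_sum (f := fun i => ∑ js : Fin p → Fin n, |D i js|)
        (fun _ _ => sum_nonneg fun _ _ => abs_nonneg _) (mem_univ i)

variable {B : Fin n → (Fin p → Fin n) → ℝ}

lemma abs_le_sum_abs_of_eigen {lam : ℝ} {x : Fin n → ℝ} (hx : x ≠ 0)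
    (he : ∀ i, tapp p n B x i = lam * x i ^ p) : |lam| ≤ ∑ i, ∑ js : Fin p → Fin n, |B i js| :=
  le_sum_abs_of_mul_pow_le B hx fun i => by rw [he, abs_mul, abs_pow]

lemma abs_le_tensorSpecRad {lam : ℝ} {x : Fin n → ℝ} (hx : x ≠ 0)
    (he : ∀ i, tapp p n B x i = lam * x i ^ p) : |lam| ≤ tensorSpecRad p n B := by
  refine le_csSup ⟨∑ i, ∑ js : Fin p → Fin n, |B i js|, ?_⟩ ⟨lam, x, hx, he, rfl⟩
  rintro r ⟨lam', x', hx', he', rfl⟩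
  exact abs_le_sum_abs_of_eigen hx' he'

lemma tensorSpecRad_nonneg : 0 ≤ tensorSpecRad p n B :=
  Real.sSup_nonneg fun _ ⟨_, _, _, _, hr⟩ => hr ▸ abs_nonneg _

end Spectrum

lemma exists_gt_forall_mul_lt {ι : Type*} [Finite ι] {l : ℝ} {a c : ι → ℝ}
    (h : ∀ i, l * a i < c i) : ∃ t > l, ∀ i, t * a i < c i := by
  have hnhds : ∀ᶠ t in 𝓝 l, ∀ i, t * a i < c i := eventually_all.2 fun i =>
    ((continuous_id.mul continuous_const).tendsto l).eventually (gt_mem_nhds (h i))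
  exact (eventually_mem_nhdsWithin.and (nhdsWithin_le_nhds hnhds : ∀ᶠ t in 𝓝[>] l, _)).exists

section PerronFrobenius

variable (C : Fin n → (Fin p → Fin n) → ℝ)

lemma exists_mem_stdSimplex_of_mul_pow_le {t : ℝ} {y : Fin n → ℝ} (hy : 0 ≤ y) (hy0 : y ≠ 0)
    (h : ∀ i, t * y i ^ p ≤ tapp p n C y i) :
    ∃ x ∈ stdSimplex ℝ (Fin n), ∀ i, t * x i ^ p ≤ tapp p n C x i := by
  obtain ⟨k, hk⟩ := Function.ne_iff.mp hy0
  have hσ : 0 < ∑ i, y i := sum_pos' (fun i _ => hy i) ⟨k, mem_univ k, (hy k).lt_of_ne' hk⟩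
  refine ⟨fun i => (∑ i, y i)⁻¹ * y i, ⟨fun i => mul_nonneg (inv_pos.2 hσ).le (hy i), ?_⟩,
    fun i => ?_⟩
  · rw [← mul_sum, inv_mul_cancel₀ hσ.ne']
  · rw [tapp_const_mul, mul_pow, mul_left_comm]
    exact mul_le_mul_of_nonneg_left (h i) (pow_nonneg (inv_pos.2 hσ).le p)

lemma le_sum_abs_of_mul_pow_le_tapp (hC : ∀ i js, 0 ≤ C i js) {t : ℝ} {x : Fin n → ℝ}
    (hx : 0 ≤ x) (hx0 : x ≠ 0) (h : ∀ i, t * x i ^ p ≤ tapp p n C x i) :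
    t ≤ ∑ i, ∑ js : Fin p → Fin n, |C i js| :=
  le_sum_abs_of_mul_pow_le C hx0 fun i => by
    rw [abs_of_nonneg (hx i), abs_of_nonneg (tapp_nonneg C hC hx i)]
    exact h i

variable {C}

lemma exists_gt_of_mul_pow_lt_tapp (hp : p ≠ 0) (hC : ∀ i js, 0 < C i js) {lam : ℝ}
    (hlam : 0 ≤ lam) {x : Fin n → ℝ} (hx : 0 ≤ x) (hx0 : x ≠ 0)
    (hsub : ∀ i, lam * x i ^ p ≤ tapp p n C x i) {j : Fin n}
    (hj : lam * x j ^ p < tapp p n C x j) :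
    ∃ t > lam, ∃ u : Fin n → ℝ, 0 ≤ u ∧ u ≠ 0 ∧ ∀ i, t * u i ^ p ≤ tapp p n C u i := by
  have hCx : ∀ i, 0 < tapp p n C x i := tapp_pos C hp hC hx hx0
  set u : Fin n → ℝ := fun i => tapp p n C x i ^ (p⁻¹ : ℝ)
  have hu : ∀ i, u i ^ p = tapp p n C x i := fun i => Real.rpow_inv_natCast_pow (hCx i).le hp
  have hupos : ∀ i, 0 < u i := fun i => Real.rpow_pos_of_pos (hCx i) _
  set r : ℝ := lam ^ (p⁻¹ : ℝ)
  have hr : r ^ p = lam := Real.rpow_inv_natCast_pow hlam hp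
  have hr0 : 0 ≤ r := Real.rpow_nonneg hlam _
  have hrx : 0 ≤ fun i => r * x i := fun i => mul_nonneg hr0 (hx i)
  have hle : (fun i => r * x i) ≤ u := fun i =>
    (pow_le_pow_iff_left₀ (hrx i) (hupos i).le hp).1 (by rw [mul_pow, hr, hu]; exact hsub i)
  have hlt : r * x j < u j :=
    (pow_lt_pow_iff_left₀ (hrx j) (hupos j).le hp).1 (by rw [mul_pow, hr, hu]; exact hj)
  -- the strict inequality at `j` spreads to every row because all entries of `C` are positive
  have hstrict : ∀ i, lam * u i ^ p < tapp p n C u i := fun i => by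
    calc lam * u i ^ p = tapp p n C (fun i => r * x i) i := by rw [tapp_const_mul, hr, hu]
      _ < tapp p n C u i := tapp_lt_tapp C hp hC hrx hle hlt i
  obtain ⟨t, ht, htu⟩ := exists_gt_forall_mul_lt hstrict
  exact ⟨t, ht, u, fun i => (hupos i).le, fun h => (hupos j).ne' (congrFun h j),
    fun i => (htu i).le⟩

theorem exists_eigen_of_pos (hp : p ≠ 0) [Nonempty (Fin n)] (hC : ∀ i js, 0 < C i js) :
    ∃ lam : ℝ, ∃ x ∈ stdSimplex ℝ (Fin n), ∀ i, tapp p n C x i = lam * x i ^ p := by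
  set M : ℝ := ∑ i, ∑ js : Fin p → Fin n, |C i js|
  -- a maximiser of `lam` is an eigenpair, since a strict row could be improved
  set W : Set (ℝ × (Fin n → ℝ)) := (Set.Icc 0 M ×ˢ stdSimplex ℝ (Fin n)) ∩
    {z | ∀ i, z.1 * z.2 i ^ p ≤ tapp p n C z.2 i}
  have hclosed : IsClosed {z : ℝ × (Fin n → ℝ) | ∀ i, z.1 * z.2 i ^ p ≤ tapp p n C z.2 i} := by
    simp only [Set.ofPred_forall]
    exact isClosed_iInter fun i => isClosed_le (by fun_prop)
      ((continuous_tapp i).comp (continuous_const.prodMk continuous_snd))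
  have hWc : IsCompact W := (isCompact_Icc.prod (isCompact_stdSimplex ℝ _)).inter_right hclosed
  have hC0 : ∀ i js, 0 ≤ C i js := fun i js => (hC i js).le
  obtain ⟨k⟩ := ‹Nonempty (Fin n)›
  have hW : ((0 : ℝ), Pi.single k 1) ∈ W :=
    ⟨⟨⟨le_rfl, by positivity⟩, single_mem_stdSimplex ℝ k⟩,
      fun i => by simpa using tapp_nonneg C hC0 (single_mem_stdSimplex ℝ k).1 i⟩
  obtain ⟨⟨lam, x⟩, ⟨⟨⟨hlam, -⟩, hx⟩, hsub⟩, hmax⟩ :=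
    hWc.exists_isMaxOn ⟨_, hW⟩ continuous_fst.continuousOn
  refine ⟨lam, x, hx, fun j => (hsub j).eq_or_lt.elim Eq.symm fun hj => ?_⟩
  obtain ⟨t, ht, u, hu, hu0, htu⟩ :=
    exists_gt_of_mul_pow_lt_tapp hp hC hlam hx.1 (ne_zero_of_mem_stdSimplex hx) hsub hj
  obtain ⟨v, hv, htv⟩ := exists_mem_stdSimplex_of_mul_pow_le C hu hu0 htu
  have hvW : (t, v) ∈ W := ⟨⟨⟨hlam.trans ht.le,
    le_sum_abs_of_mul_pow_le_tapp C hC0 hv.1 (ne_zero_of_mem_stdSimplex hv) htv⟩, hv⟩, htv⟩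
  exact (ht.not_ge (hmax hvW)).elim

lemma pos_of_eigen_of_pos (hp : p ≠ 0) (hC : ∀ i js, 0 < C i js) {lam : ℝ} {x : Fin n → ℝ}
    (hx : 0 ≤ x) (hx0 : x ≠ 0) (he : ∀ i, tapp p n C x i = lam * x i ^ p) (i : Fin n) : 0 < x i :=
  (hx i).lt_of_ne' fun hxi => by
    have := tapp_pos C hp hC hx hx0 i
    rw [he, hxi, Pi.zero_apply, zero_pow hp, mul_zero] at this
    exact this.false

end PerronFrobenius

lemma exists_eigen_ge_of_forall_add_const {B : Fin n → (Fin p → Fin n) → ℝ} {s : ℝ}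
    (h : ∀ ε ∈ Set.Ioc (0 : ℝ) 1, ∃ lam, s ≤ lam ∧ ∃ x ∈ stdSimplex ℝ (Fin n),
      ∀ i, tapp p n (fun i js => B i js + ε) x i = lam * x i ^ p) :
    ∃ lam, s ≤ lam ∧ ∃ x ∈ stdSimplex ℝ (Fin n), ∀ i, tapp p n B x i = lam * x i ^ p := by
  set M : ℝ := ∑ i, ∑ js : Fin p → Fin n, (|B i js| + 1)
  -- the eigenpairs of the `B + ε` lie in a compact set, closed under `ε → 0`
  set E : Set (ℝ × ℝ × (Fin n → ℝ)) :=
    (Set.Icc 0 1 ×ˢ Set.Icc s M ×ˢ stdSimplex ℝ (Fin n)) ∩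
      {z | ∀ i, tapp p n (fun i js => B i js + z.1) z.2.2 i = z.2.1 * z.2.2 i ^ p}
  have hclosed : IsClosed
      {z : ℝ × ℝ × (Fin n → ℝ) | ∀ i, tapp p n (fun i js => B i js + z.1) z.2.2 i =
        z.2.1 * z.2.2 i ^ p} := by
    simp only [Set.ofPred_forall]
    exact isClosed_iInter fun i => isClosed_eq ((continuous_tapp i).comp
      (f := fun z : ℝ × ℝ × (Fin n → ℝ) => (fun i js => B i js + z.1, z.2.2)) (by fun_prop))
      (by fun_prop)
  have hEc : IsCompact E :=
    (isCompact_Icc.prod (isCompact_Icc.prod (isCompact_stdSimplex ℝ _))).inter_right hclosed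
  have hproj : Set.Ioc 0 1 ⊆ Prod.fst '' E := fun ε hε => by
    obtain ⟨lam, hslam, x, hx, he⟩ := h ε hε
    have hlamM : lam ≤ M := (le_abs_self lam).trans <|
      (abs_le_sum_abs_of_eigen (ne_zero_of_mem_stdSimplex hx) he).trans <|
        sum_le_sum fun i _ => sum_le_sum fun js _ =>
          (abs_add_le _ _).trans (by rw [abs_of_pos hε.1]; linarith [hε.2])
    exact ⟨(ε, lam, x), ⟨⟨⟨hε.1.le, hε.2⟩, ⟨hslam, hlamM⟩, hx⟩, he⟩, rfl⟩
  have h0 : (0 : ℝ) ∈ Prod.fst '' E := by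
    refine (hEc.image continuous_fst).isClosed.closure_subset_iff.2 hproj ?_
    rw [closure_Ioc zero_ne_one]
    exact ⟨le_rfl, zero_le_one⟩
  obtain ⟨⟨_, lam, x⟩, ⟨⟨-, ⟨hslam, -⟩, hx⟩, he⟩, rfl⟩ := h0
  exact ⟨lam, hslam, x, hx, by simpa using he⟩

theorem exists_pos_tapp_lt_of_tensorSpecRad_lt (hp : p ≠ 0) {B : Fin n → (Fin p → Fin n) → ℝ}
    (hB : ∀ i js, 0 ≤ B i js) {s : ℝ} (hρ : tensorSpecRad p n B < s) :
    ∃ w : Fin n → ℝ, (∀ i, 0 < w i) ∧ ∀ i, tapp p n B w i < s * w i ^ p := by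
  rcases isEmpty_or_nonempty (Fin n) with _ | _
  · exact ⟨0, isEmptyElim, isEmptyElim⟩
  by_contra! hno
  obtain ⟨lam, hslam, x, hx, he⟩ := exists_eigen_ge_of_forall_add_const (s := s) fun ε hε => by
    have hC : ∀ i js, 0 < B i js + ε := fun i js => by linarith [hB i js, hε.1]
    obtain ⟨lam, x, hx, he⟩ := exists_eigen_of_pos hp hC
    have hxpos := pos_of_eigen_of_pos hp hC hx.1 (ne_zero_of_mem_stdSimplex hx) he
    obtain ⟨i, hi⟩ := hno x hxpos
    refine ⟨lam, le_of_mul_le_mul_right ?_ (pow_pos (hxpos i) p), x, hx, he⟩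
    calc s * x i ^ p ≤ tapp p n B x i := hi
      _ ≤ tapp p n (fun i js => B i js + ε) x i :=
        (tapp_lt_tapp_left B (fun js => lt_add_of_pos_right _ hε.1) hxpos).le
      _ = lam * x i ^ p := he i
  have := (le_abs_self lam).trans (abs_le_tensorSpecRad (ne_zero_of_mem_stdSimplex hx) he)
  linarith

section Equation

variable {B : Fin n → (Fin p → Fin n) → ℝ} {s : ℝ} {b : Fin n → ℝ}

lemma exists_supersolution (hp : p ≠ 0) {w : Fin n → ℝ} (hw : ∀ i, 0 < w i)
    (hBw : ∀ i, tapp p n B w i < s * w i ^ p) (b : Fin n → ℝ) :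
    ∃ u : Fin n → ℝ, 0 ≤ u ∧ ∀ i, b i + tapp p n B u i ≤ s * u i ^ p := by
  have hev : ∀ᶠ c : ℝ in atTop, 0 ≤ c ∧ ∀ i, b i ≤ c ^ p * (s * w i ^ p - tapp p n B w i) :=
    (eventually_ge_atTop 0).and <| eventually_all.2 fun i =>
      ((tendsto_pow_atTop hp).atTop_mul_const (sub_pos.2 (hBw i))).eventually_ge_atTop (b i)
  obtain ⟨c, hc0, hc⟩ := hev.exists
  refine ⟨fun i => c * w i, fun i => mul_nonneg hc0 (hw i).le, fun i => ?_⟩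
  rw [tapp_const_mul, mul_pow]
  linarith [hc i]

variable (p n B s b) in
def jacobiMap (x : Fin n → ℝ) : Fin n → ℝ :=
  fun i => ((b i + tapp p n B x i) / s) ^ (p⁻¹ : ℝ)

variable (hB : ∀ i js, 0 ≤ B i js) (hs : 0 < s)
include hB hs

lemma jacobiMap_pos (hb : ∀ i, 0 < b i) {x : Fin n → ℝ} (hx : 0 ≤ x) (i : Fin n) :
    0 < jacobiMap p n B s b x i :=
  Real.rpow_pos_of_pos (div_pos (add_pos_of_pos_of_nonneg (hb i) (tapp_nonneg B hB hx i)) hs) _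

lemma jacobiMap_mono (hb : 0 ≤ b) {x y : Fin n → ℝ} (hx : 0 ≤ x) (hxy : x ≤ y) :
    jacobiMap p n B s b x ≤ jacobiMap p n B s b y := fun i =>
  Real.rpow_le_rpow (div_nonneg (add_nonneg (hb i) (tapp_nonneg B hB hx i)) hs.le)
    (div_le_div_of_nonneg_right (add_le_add le_rfl (tapp_le_tapp_s17 B hB hx hxy i)) hs.le)
    (by positivity)

lemma mul_jacobiMap_pow (hp : p ≠ 0) (hb : 0 ≤ b) {x : Fin n → ℝ} (hx : 0 ≤ x) (i : Fin n) :
    s * jacobiMap p n B s b x i ^ p = b i + tapp p n B x i := by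
  rw [jacobiMap, Real.rpow_inv_natCast_pow
    (div_nonneg (add_nonneg (hb i) (tapp_nonneg B hB hx i)) hs.le) hp, mul_div_cancel₀ _ hs.ne']

lemma jacobiMap_le_of_supersolution (hp : p ≠ 0) (hb : 0 ≤ b) {u : Fin n → ℝ} (hu : 0 ≤ u)
    (hsup : ∀ i, b i + tapp p n B u i ≤ s * u i ^ p) : jacobiMap p n B s b u ≤ u := fun i =>
  (pow_le_pow_iff_left₀ (Real.rpow_nonneg (div_nonneg (add_nonneg (hb i)
    (tapp_nonneg B hB hu i)) hs.le) _) (hu i) hp).1 <|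
      le_of_mul_le_mul_left ((mul_jacobiMap_pow hB hs hp hb hu i).trans_le (hsup i)) hs

omit hs in
lemma pos_of_nonneg_of_mul_pow_eq (hp : p ≠ 0) (hb : ∀ i, 0 < b i) {y : Fin n → ℝ} (hy : 0 ≤ y)
    (he : ∀ i, s * y i ^ p = b i + tapp p n B y i) (i : Fin n) : 0 < y i :=
  (hy i).lt_of_ne' fun hyi => by
    have := he i
    rw [hyi, Pi.zero_apply, zero_pow hp, mul_zero] at this
    linarith [hb i, tapp_nonneg B hB hy i]

theorem exists_pos_solution (hp : p ≠ 0) (hb : ∀ i, 0 < b i) {u : Fin n → ℝ} (hu : 0 ≤ u)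
    (hsup : ∀ i, b i + tapp p n B u i ≤ s * u i ^ p) :
    ∃ x : Fin n → ℝ, (∀ i, 0 < x i) ∧ ∀ i, s * x i ^ p = b i + tapp p n B x i := by
  have hb0 : 0 ≤ b := fun i => (hb i).le
  have : Fact (0 ≤ u) := ⟨hu⟩
  let T : Set.Icc 0 u →o Set.Icc 0 u :=
    { toFun := fun x => ⟨jacobiMap p n B s b x, fun i => (jacobiMap_pos hB hs hb x.2.1 i).le,
        (jacobiMap_mono hB hs hb0 x.2.1 x.2.2).trans
          (jacobiMap_le_of_supersolution hB hs hp hb0 hu hsup)⟩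
      monotone' := fun x _ hxy => jacobiMap_mono hB hs hb0 x.2.1 hxy }
  have hfix : jacobiMap p n B s b T.lfp = T.lfp := congrArg Subtype.val T.map_lfp
  refine ⟨T.lfp, fun i => hfix ▸ jacobiMap_pos hB hs hb T.lfp.2.1 i, fun i => ?_⟩
  rw [← mul_jacobiMap_pow hB hs hp hb0 T.lfp.2.1, hfix]

omit hs in
theorem le_of_subsolution_of_supersolution (hp : p ≠ 0) (hb : ∀ i, 0 < b i) {u w : Fin n → ℝ}
    (hu : ∀ i, 0 < u i) (hw : 0 ≤ w) (hsub : ∀ i, s * w i ^ p ≤ b i + tapp p n B w i)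
    (hsup : ∀ i, b i + tapp p n B u i ≤ s * u i ^ p) : w ≤ u := by
  intro i
  obtain ⟨k, -, hk⟩ := exists_max_image univ (fun j => w j / u j) ⟨i, mem_univ i⟩
  set t := w k / u k
  have hwt : w ≤ fun j => t * u j := fun j => (div_le_iff₀ (hu j)).1 (hk j (mem_univ j))
  suffices ht : t ≤ 1 from (hwt i).trans (mul_le_of_le_one_left (hu i).le ht)
  by_contra! ht
  have hwk : w k = t * u k := (div_mul_cancel₀ _ (hu k).ne').symm
  have hBw : tapp p n B w k ≤ t ^ p * tapp p n B u k :=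
    tapp_const_mul B t u k ▸ tapp_le_tapp_s17 B hB hw hwt k
  have hbt : b k < t ^ p * b k := lt_mul_left (hb k) (one_lt_pow₀ ht hp)
  have hsw : s * w k ^ p = t ^ p * (s * u k ^ p) := by rw [hwk, mul_pow]; ring
  nlinarith [hsub k, hsup k, pow_pos (zero_lt_one.trans ht) p]

end Equation

end TensorEquation

/-- for a nonsingular M-tensor and `b > 0`, the equation `A x^{m-1} = b`
has a positive solution which is the only nonnegative solution. -/
theorem stmt17 (m n : ℕ) (hm : 2 ≤ m) (A : Fin n → (Fin (m-1) → Fin n) → ℝ)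
    (hA : IsMTensor (m-1) n A) (b : Fin n → ℝ) (hb : ∀ i, 0 < b i) :
    ∃ x : Fin n → ℝ, (∀ i, 0 < x i) ∧ tapp (m-1) n A x = b ∧
      ∀ y : Fin n → ℝ, 0 ≤ y → tapp (m-1) n A y = b → y = x := by
  obtain ⟨s, B, hB, hρ, hAB⟩ := hA
  have hp : m - 1 ≠ 0 := by omega
  have hs : 0 < s := tensorSpecRad_nonneg.trans_lt hρ
  have hsol : ∀ y, tapp (m-1) n A y = b ↔ ∀ i, s * y i ^ (m-1) = b i + tapp (m-1) n B y i :=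
    fun y => by simp only [funext_iff, tapp_eq_mul_pow_sub A hAB, sub_eq_iff_eq_add]
  obtain ⟨w, hw, hBw⟩ := exists_pos_tapp_lt_of_tensorSpecRad_lt hp hB hρ
  obtain ⟨u, hu, hsup⟩ := exists_supersolution hp hw hBw b
  obtain ⟨x, hx, hxe⟩ := exists_pos_solution hB hs hp hb hu hsup
  refine ⟨x, hx, (hsol x).2 hxe, fun y hy hye => ?_⟩
  replace hye := (hsol y).1 hye
  have hypos := pos_of_nonneg_of_mul_pow_eq hB hp hb hy hye
  exact le_antisymm
    (le_of_subsolution_of_supersolution hB hp hb hx hy (fun i => (hye i).le) fun i => (hxe i).ge)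
    (le_of_subsolution_of_supersolution hB hp hb hypos (fun i => (hx i).le) (fun i => (hxe i).le)
      fun i => (hye i).ge)

end
end
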